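/- Let D[1..n] be an array of integers equipped with range minimum queries, and let Δ be a threshold. The recursive procedure that queries k = rmq(i,j), stops if D[k] > Δ, and otherwise reports k and recurses on [i..k−1] and [k+1..j], started on [1..n], reports exactly the set of indices i with D[i] ≤ Δ, and performs a number of rmq operations linear in the number of reported indices plus one. -/

import Mathlib

/-- The recursive range-minimum-query reporting procedure on the (1-based)
interval `[i..j]`, with a fuel parameter ensuring termination. It returns the
list of reported indices together with the number of `rmq` operations
performed. -/
def report (D : ℕ → ℤ) (Δ : ℤ) (rmq : ℕ → ℕ → ℕ) : ℕ → ℕ → ℕ → List ℕ × ℕ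
  | 0, _, _ => ([], 0)
  | fuel + 1, i, j =>
    if j < i then ([], 0)
    else
      let k := rmq i j
      if Δ < D k then ([], 1)
      else
        let left := report D Δ rmq fuel i (k - 1)
        let right := report D Δ rmq fuel (k + 1) j
        (left.1 ++ k :: right.1, 1 + left.2 + right.2)

lemma report_spec (n : ℕ) (D : ℕ → ℤ) (Δ : ℤ) (rmq : ℕ → ℕ → ℕ)
    (hrmq : ∀ i j : ℕ, 1 ≤ i → i ≤ j → j ≤ n →
      i ≤ rmq i j ∧ rmq i j ≤ j ∧ ∀ t : ℕ, i ≤ t → t ≤ j → D (rmq i j) ≤ D t) :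
    ∀ fuel i j : ℕ, 1 ≤ i → j ≤ n → j + 1 ≤ i + fuel →
    (∀ m : ℕ, m ∈ (report D Δ rmq fuel i j).1 ↔ (i ≤ m ∧ m ≤ j ∧ D m ≤ Δ)) ∧
    (report D Δ rmq fuel i j).1.Nodup ∧
    (report D Δ rmq fuel i j).2 ≤ 2 * (report D Δ rmq fuel i j).1.length + 1 := by
  intro fuel
  induction fuel with
  | zero =>
    intro i j hi hj hf
    simp [report]
    intro m him hmj
    omega
  | succ fuel ih =>
    intro i j hi hj hf
    rw [report]
    by_cases hji : j < i
    · simp [hji]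
      intro m him hmj; omega
    · simp only [if_neg hji]
      push_neg at hji
      obtain ⟨hik, hkj, hmin⟩ := hrmq i j hi hji hj
      set k := rmq i j with hk
      by_cases hD : Δ < D k
      · simp only [if_pos hD]
        constructor
        · intro m
          simp only [List.not_mem_nil, false_iff]
          rintro ⟨him, hmj, hm⟩
          exact absurd hm (not_le.mpr (lt_of_lt_of_le hD (hmin m him hmj)))
        · simp
      · simp only [if_neg hD]
        push_neg at hD
        obtain ⟨memL, ndL, cL⟩ := ih i (k - 1) hi (by omega) (by omega)
        obtain ⟨memR, ndR, cR⟩ := ih (k + 1) j (by omega) hj (by omega)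
        refine ⟨?_, ?_, ?_⟩
        · intro m
          simp only [List.mem_append, List.mem_cons, memL, memR]
          constructor
          · rintro (⟨h1, h2, h3⟩ | h | ⟨h1, h2, h3⟩)
            · exact ⟨h1, by omega, h3⟩
            · subst h; exact ⟨hik, hkj, hD⟩
            · exact ⟨by omega, h2, h3⟩
          · rintro ⟨h1, h2, h3⟩
            rcases lt_trichotomy m k with h | h | h
            · exact Or.inl ⟨h1, by omega, h3⟩
            · exact Or.inr (Or.inl h)
            · exact Or.inr (Or.inr ⟨by omega, h2, h3⟩)
        · rw [List.nodup_append]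
          refine ⟨ndL, ?_, ?_⟩
          · rw [List.nodup_cons]
            refine ⟨fun h => ?_, ndR⟩
            have := (memR k).mp h; omega
          · intro a haL
            have h1 := (memL a).mp haL
            simp only [List.mem_cons]
            rintro b (h | h)
            · omega
            · have := (memR b).mp h; omega
        · simp only [List.length_append, List.length_cons]
          omega

/-- If `rmq i j` always returns a position of a minimum of
`D[i..j]` (for nonempty ranges `[i..j] ⊆ [1..n]`), then the recursive
procedure started on `[1..n]` reports (without repetition) exactly the
indices `i ∈ [1..n]` with `D i ≤ Δ`, and the number of `rmq` operations it
performs is linear in the number of reported indices plus one (at most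
`2·R + 1`). -/
theorem stmt6 (n : ℕ) (D : ℕ → ℤ) (Δ : ℤ) (rmq : ℕ → ℕ → ℕ)
    (hrmq : ∀ i j : ℕ, 1 ≤ i → i ≤ j → j ≤ n →
      i ≤ rmq i j ∧ rmq i j ≤ j ∧ ∀ t : ℕ, i ≤ t → t ≤ j → D (rmq i j) ≤ D t) :
    (∀ m : ℕ, m ∈ (report D Δ rmq (n + 1) 1 n).1 ↔ (1 ≤ m ∧ m ≤ n ∧ D m ≤ Δ)) ∧
    (report D Δ rmq (n + 1) 1 n).1.Nodup ∧
    (report D Δ rmq (n + 1) 1 n).2 ≤ 2 * (report D Δ rmq (n + 1) 1 n).1.length + 1 :=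
  report_spec n D Δ rmq hrmq (n + 1) 1 n le_rfl le_rfl (by omega)
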